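/- Let ((A, μ_A, α_A), (B, μ_B, α_B), dt, φ) be a crossed module of hom-associative algebras. Set A₁ := A, A₀ := B, d := dt, α₁ := α_A, α₀ := α_B, and define μ₂(b,b') := μ_B(b,b'), μ₂(b,m) := φ(b,m), μ₂(m,b) := φ(m,b) for b, b' ∈ A₀ and m ∈ A₁, and μ₃ := 0. Then (A₁ →d A₀, μ₂, μ₃, α₀, α₁) is a strict 2-term HA∞-algebra, i.e. all the defining axioms of a 2-term HA∞-algebra hold for this data. -/

import Mathlib

/-- A 2-term HA∞-algebra `(A₁ →d A₀, μ₂, μ₃, α₀, α₁)` over a field `k`.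
`m00`, `m01`, `m10` are the three components of the bilinear map `μ₂`,
`m3` is the trilinear map `μ₃`, and `a0`, `a1` are the linear maps `α₀`, `α₁`. -/
structure TwoTermHA (k : Type*) [Field k] (A0 A1 : Type*)
    [AddCommGroup A0] [Module k A0] [AddCommGroup A1] [Module k A1] where
  d : A1 →ₗ[k] A0
  m00 : A0 →ₗ[k] A0 →ₗ[k] A0
  m01 : A0 →ₗ[k] A1 →ₗ[k] A1
  m10 : A1 →ₗ[k] A0 →ₗ[k] A1
  m3 : A0 →ₗ[k] A0 →ₗ[k] A0 →ₗ[k] A1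
  a0 : A0 →ₗ[k] A0
  a1 : A1 →ₗ[k] A1
  comm_d : ∀ m, a0 (d m) = d (a1 m)
  comm_m3 : ∀ a b c, a1 (m3 a b c) = m3 (a0 a) (a0 b) (a0 c)
  axb : ∀ a b, a0 (m00 a b) = m00 (a0 a) (a0 b)
  axc : ∀ a m, a1 (m01 a m) = m01 (a0 a) (a1 m)
  axd : ∀ m a, a1 (m10 m a) = m10 (a1 m) (a0 a)
  axe : ∀ a m, d (m01 a m) = m00 a (d m)
  axf : ∀ m a, d (m10 m a) = m00 (d m) a
  axg : ∀ m n, m01 (d m) n = m10 m (d n)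
  axh : ∀ a b c, d (m3 a b c) = m00 (m00 a b) (a0 c) - m00 (a0 a) (m00 b c)
  axi1 : ∀ a b m, m3 a b (d m) = m01 (m00 a b) (a1 m) - m01 (a0 a) (m01 b m)
  axi2 : ∀ a m c, m3 a (d m) c = m10 (m01 a m) (a0 c) - m01 (a0 a) (m10 m c)
  axi3 : ∀ m b c, m3 (d m) b c = m10 (m10 m b) (a0 c) - m10 (a1 m) (m00 b c)
  axj : ∀ a b c e,
    m3 (m00 a b) (a0 c) (a0 e) - m3 (a0 a) (m00 b c) (a0 e)
        + m3 (a0 a) (a0 b) (m00 c e)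
      = m10 (m3 a b c) (a0 (a0 e)) + m01 (a0 (a0 a)) (m3 b c e)

namespace TwoTermHA

variable {k A0 A1 : Type*} [Field k]
  [AddCommGroup A0] [Module k A0] [AddCommGroup A1] [Module k A1]

/-- With `μ₃ = 0`, axioms (h), (i1), (i2), (i3) become hom-associativity of `μ₂` in each of
its four degree patterns, and `comm_m3` and (j) become trivial. -/
def mkStrict (d : A1 →ₗ[k] A0) (m00 : A0 →ₗ[k] A0 →ₗ[k] A0) (m01 : A0 →ₗ[k] A1 →ₗ[k] A1)
    (m10 : A1 →ₗ[k] A0 →ₗ[k] A1) (a0 : A0 →ₗ[k] A0) (a1 : A1 →ₗ[k] A1)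
    (comm_d : ∀ m, a0 (d m) = d (a1 m))
    (axb : ∀ a b, a0 (m00 a b) = m00 (a0 a) (a0 b))
    (axc : ∀ a m, a1 (m01 a m) = m01 (a0 a) (a1 m))
    (axd : ∀ m a, a1 (m10 m a) = m10 (a1 m) (a0 a))
    (axe : ∀ a m, d (m01 a m) = m00 a (d m))
    (axf : ∀ m a, d (m10 m a) = m00 (d m) a)
    (axg : ∀ m n, m01 (d m) n = m10 m (d n))
    (assoc₀₀₀ : ∀ a b c, m00 (a0 a) (m00 b c) = m00 (m00 a b) (a0 c))
    (assoc₀₀₁ : ∀ a b m, m01 (a0 a) (m01 b m) = m01 (m00 a b) (a1 m))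
    (assoc₀₁₀ : ∀ a m c, m01 (a0 a) (m10 m c) = m10 (m01 a m) (a0 c))
    (assoc₁₀₀ : ∀ m b c, m10 (a1 m) (m00 b c) = m10 (m10 m b) (a0 c)) :
    TwoTermHA k A0 A1 where
  d := d
  m00 := m00
  m01 := m01
  m10 := m10
  m3 := 0
  a0 := a0
  a1 := a1
  comm_d := comm_d
  comm_m3 _ _ _ := by simp
  axb := axb
  axc := axc
  axd := axd
  axe := axe
  axf := axf
  axg := axg
  axh a b c := by simp [assoc₀₀₀]
  axi1 a b m := by simp [assoc₀₀₁]
  axi2 a m c := by simp [assoc₀₁₀]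
  axi3 m b c := by simp [assoc₁₀₀]
  axj _ _ _ _ := by simp

end TwoTermHA

theorem crossed_module_gives_strict
    {k A B : Type*} [Field k]
    [AddCommGroup A] [Module k A] [AddCommGroup B] [Module k B]
    (μA : A →ₗ[k] A →ₗ[k] A) (αA : A →ₗ[k] A)
    (μB : B →ₗ[k] B →ₗ[k] B) (αB : B →ₗ[k] B)
    (dt : A →ₗ[k] B)
    (φL : B →ₗ[k] A →ₗ[k] A) (φR : A →ₗ[k] B →ₗ[k] A)
    -- (A, μ_A, α_A) and (B, μ_B, α_B) are hom-associative algebras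
    (hαB : ∀ a b, αB (μB a b) = μB (αB a) (αB b))
    (hassB : ∀ a b c, μB (αB a) (μB b c) = μB (μB a b) (αB c))
    -- dt is a morphism of hom-associative algebras
    (hdtα : ∀ m, dt (αA m) = αB (dt m))
    -- φ defines a hom-bimodule structure on A over (B, μ_B, α_B) with respect to α_A
    (hφL : ∀ b m, αA (φL b m) = φL (αB b) (αA m))
    (hφR : ∀ m b, αA (φR m b) = φR (αA m) (αB b))
    (hbm1 : ∀ a b m, φL (αB a) (φL b m) = φL (μB a b) (αA m))
    (hbm2 : ∀ a b m, φR (αA m) (μB a b) = φR (φR m a) (αB b))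
    (hbm3 : ∀ a b m, φL (αB a) (φR m b) = φR (φL a m) (αB b))
    -- the six crossed-module identities
    (hcm1 : ∀ b m, dt (φL b m) = μB b (dt m))
    (hcm2 : ∀ m b, dt (φR m b) = μB (dt m) b)
    (hcm3 : ∀ m n, φL (dt m) n = μA m n)
    (hcm4 : ∀ m n, φR m (dt n) = μA m n) :
    ∃ T : TwoTermHA k B A,
      T.d = dt ∧ T.m00 = μB ∧ T.m01 = φL ∧ T.m10 = φR ∧ T.m3 = 0
        ∧ T.a0 = αB ∧ T.a1 = αA :=
  ⟨.mkStrict dt μB φL φR αB αA (fun m => (hdtα m).symm) hαB hφL hφR hcm1 hcm2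
      (fun m n => by rw [hcm3, hcm4]) hassB hbm1
      (fun a m c => hbm3 a c m) (fun m b c => hbm2 b c m),
    rfl, rfl, rfl, rfl, rfl, rfl, rfl⟩
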